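/- Under a general metric, a fairly-preferring hospital can strictly prefer a deterministic unfair alternative to every PIIF allocation: let D = {i, j} and H = {A, B}, let d be the pseudometric with d(i,j) = 1/3, and suppose both doctors have the preference A ≻ B. Then every probabilistic allocation π that is PIIF with respect to total variation distance and d satisfies Pr_{m∼π}[m(j) = A] ≥ 1/3, and consequently (2/3)·Pr_{m∼π}[m(i) = A] + (1/3)·Pr_{m∼π}[m(j) = A] ≤ 5/9 < 2/3. In particular, if hospital A samples the order i ≻ j with probability 2/3 and j ≻ i with probability 1/3, then under any PIIF allocation the probability that A is matched to its sampled top-ranked doctor is at most 5/9, whereas the deterministic matching sending i to A achieves probability 2/3. -/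

import Mathlib

open Finset

/-- A probabilistic allocation: a finitely supported probability distribution over
matchings (bijections between doctors `D` and hospitals `H`). -/
def IsAlloc {D H : Type*} [Fintype D] [Fintype H] [DecidableEq D] [DecidableEq H]
    (π : (D ≃ H) → ℝ) : Prop :=
  (∀ m, 0 ≤ π m) ∧ (∑ m : D ≃ H, π m) = 1

/-- The prospect of doctor `i` under the allocation `π`: the probability that `i`
is matched to hospital `h`. -/
def prospect {D H : Type*} [Fintype D] [Fintype H] [DecidableEq D] [DecidableEq H]
    (π : (D ≃ H) → ℝ) (i : D) (h : H) : ℝ :=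
  ∑ m : D ≃ H, if m i = h then π m else 0

/-- `p` is a probability distribution on `H`. -/
def IsDist {H : Type*} [Fintype H] (p : H → ℝ) : Prop :=
  (∀ h, 0 ≤ p h) ∧ (∑ h : H, p h) = 1

/-- Total variation distance between two distributions on `H`. -/
noncomputable def TV {H : Type*} [Fintype H] (p q : H → ℝ) : ℝ :=
  (1 / 2) * ∑ h : H, |p h - q h|

/-- `p` stochastically dominates `q` with respect to the strict preference relation
`pref` (where `pref x y` means `x` is strictly preferred to `y`): for every `h`, the
probability of an outcome at least as good as `h` under `p` is at least that under `q`. -/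
def SDom {H : Type*} [Fintype H] (pref : H → H → Prop) (p q : H → ℝ) : Prop :=
  ∀ h : H,
    (∑ h' : H, Set.indicator {x : H | pref x h ∨ x = h} q h') ≤
      ∑ h' : H, Set.indicator {x : H | pref x h ∨ x = h} p h'

/-- Preference-informed individual fairness with respect to a (pseudo)metric `d`,
total variation distance, and the doctors' strict preferences `pref`. -/
def PIIF {D H : Type*} [Fintype D] [Fintype H] [DecidableEq D] [DecidableEq H]
    (d : D → D → ℝ) (pref : D → H → H → Prop) (π : (D ≃ H) → ℝ) : Prop :=
  ∀ i j : D, ∃ p : H → ℝ,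
    IsDist p ∧ TV p (prospect π j) ≤ d i j ∧ SDom (pref i) (prospect π i) p

/-- PIIF with respect to the proto-metric induced by the cluster map `c`: the prospect
of every doctor stochastically dominates the prospect of every doctor in its cluster. -/
def ClusterPIIF {D H K : Type*} [Fintype D] [Fintype H] [DecidableEq D] [DecidableEq H]
    (c : D → K) (pref : D → H → H → Prop) (π : (D ≃ H) → ℝ) : Prop :=
  ∀ i j : D, c i = c j → SDom (pref i) (prospect π i) (prospect π j)

namespace Stmt7

/-! Doctors: `i = 0`, `j = 1`.  Hospitals: `A = 0`, `B = 1`. -/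

/-- The pseudometric with `d(i,j) = 1/3`. -/
noncomputable def dmet : Fin 2 → Fin 2 → ℝ := fun x y => if x = y then 0 else 1 / 3

/-- Both doctors prefer `A = 0` to `B = 1`. -/
def dpref : Fin 2 → Fin 2 → Fin 2 → Prop := fun _ h1 h2 => h1 < h2

/-- The deterministic allocation matching `i ↦ A, j ↦ B` (the identity matching). -/
noncomputable def detAlloc : (Fin 2 ≃ Fin 2) → ℝ := fun m =>
  if m = Equiv.refl (Fin 2) then 1 else 0

section General

variable {D H : Type*} [Fintype D] [Fintype H]

theorem abs_sub_le_TV {p q : H → ℝ} (hpq : ∑ x, p x = ∑ x, q x) (h : H) :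
    |p h - q h| ≤ TV p q := by
  classical
  have hzero : ∑ x, (p x - q x) = 0 := by rw [Finset.sum_sub_distrib, hpq, sub_self]
  rw [← Finset.add_sum_erase _ _ (Finset.mem_univ h)] at hzero
  have hrest : |p h - q h| ≤ ∑ x ∈ univ.erase h, |p x - q x| := by
    rw [eq_neg_of_add_eq_zero_left hzero, abs_neg]
    exact Finset.abs_sum_le_sum_abs _ _
  have htotal := Finset.add_sum_erase univ (fun x => |p x - q x|) (Finset.mem_univ h)
  unfold TV
  linarith

theorem apply_le_of_SDom_of_forall_not_pref {pref : H → H → Prop} {p q : H → ℝ}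
    (hpq : SDom pref p q) {h : H} (htop : ∀ x, ¬ pref x h) : q h ≤ p h := by
  have hset : {x : H | pref x h ∨ x = h} = {h} := by
    ext x
    simp [htop x]
  classical
  simpa [hset, Set.indicator_apply] using hpq h

variable [DecidableEq D] [DecidableEq H]

theorem sum_prospect_doctor (π : (D ≃ H) → ℝ) (i : D) :
    ∑ h, prospect π i h = ∑ m, π m := by
  unfold prospect
  rw [Finset.sum_comm]
  simp

theorem sum_prospect_hospital (π : (D ≃ H) → ℝ) (h : H) :
    ∑ i, prospect π i h = ∑ m, π m := by
  unfold prospect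
  rw [Finset.sum_comm]
  refine Finset.sum_congr rfl fun m _ => ?_
  simp [← m.eq_symm_apply]

theorem prospect_ite_eq (σ : D ≃ H) (i : D) (h : H) :
    prospect (fun m => if m = σ then 1 else 0) i h = if σ i = h then 1 else 0 := by
  unfold prospect
  rw [Finset.sum_eq_single σ (fun m _ hm => by simp [hm]) (by simp)]
  simp

theorem prospect_le_prospect_add_of_PIIF {d : D → D → ℝ} {pref : D → H → H → Prop}
    {π : (D ≃ H) → ℝ}
    (hπ : IsAlloc π) (hfair : PIIF d pref π) (i j : D) {h : H} (htop : ∀ x, ¬ pref j x h) :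
    prospect π i h ≤ prospect π j h + d j i := by
  obtain ⟨p, ⟨-, hp⟩, htv, hdom⟩ := hfair j i
  have hsum : ∑ x, p x = ∑ x, prospect π i x := by rw [hp, sum_prospect_doctor, hπ.2]
  have hclose := (abs_sub_le_TV hsum h).trans htv
  have hbelow := apply_le_of_SDom_of_forall_not_pref hdom htop
  linarith [neg_abs_le (p h - prospect π i h)]

end General

theorem fair_preferences_prefer_unfair_deterministic_alternative :
    (∀ π : (Fin 2 ≃ Fin 2) → ℝ, IsAlloc π → PIIF dmet dpref π →
      1 / 3 ≤ prospect π 1 0 ∧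
      (2 / 3) * prospect π 0 0 + (1 / 3) * prospect π 1 0 ≤ 5 / 9) ∧
    (5 : ℝ) / 9 < 2 / 3 ∧
    (2 / 3) * prospect detAlloc 0 0 + (1 / 3) * prospect detAlloc 1 0 = 2 / 3 := by
  refine ⟨fun π hπ hfair => ?_, by norm_num, ?_⟩
  · have hA : prospect π 0 0 + prospect π 1 0 = 1 := by
      rw [← Fin.sum_univ_two (prospect π · 0), sum_prospect_hospital, hπ.2]
    have hA_top : prospect π 0 0 ≤ prospect π 1 0 + dmet 1 0 :=
      prospect_le_prospect_add_of_PIIF hπ hfair 0 1 fun x => Fin.not_lt_zero x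
    have hd : dmet 1 0 = 1 / 3 := by norm_num [dmet]
    constructor <;> linarith
  · unfold detAlloc
    simp only [prospect_ite_eq, Equiv.refl_apply]
    norm_num

end Stmt7
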